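/- Let I be a monomial ideal in R = K[x_1,...,x_n] with minimal generators u_1,...,u_m, and let h be a monomial in R with gcd(h, u) = 1 for all minimal generators u of I. Then I is nearly normally torsion-free if and only if hI is nearly normally torsion-free. -/

import Mathlib

open MvPolynomial
open scoped Classical

/-- `I` is a monomial ideal: generated by monomials. -/
def IsMonomialIdeal {K : Type*} [Field K] {n : ℕ} (I : Ideal (MvPolynomial (Fin n) K)) : Prop :=
  ∃ G : Set (Fin n →₀ ℕ), I = Ideal.span ((fun m => monomial m (1 : K)) '' G)

/-- `m` is (the exponent vector of) a minimal monomial generator of `I`. -/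
def IsMinGen {K : Type*} [Field K] {n : ℕ} (I : Ideal (MvPolynomial (Fin n) K))
    (m : Fin n →₀ ℕ) : Prop :=
  monomial m (1 : K) ∈ I ∧ ∀ m' : Fin n →₀ ℕ, m' ≤ m → m' ≠ m → monomial m' (1 : K) ∉ I

/-- A monomial prime ideal: generated by a set of variables. -/
def IsMonomialPrime {K : Type*} [Field K] {n : ℕ} (p : Ideal (MvPolynomial (Fin n) K)) : Prop :=
  ∃ S : Set (Fin n), p = Ideal.span (X '' S)

/-- Nearly normally torsion-free. -/
def IsNearlyNTF {K : Type*} [Field K] {n : ℕ} (I : Ideal (MvPolynomial (Fin n) K)) : Prop :=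
  ∃ k : ℕ, 1 ≤ k ∧ ∃ p : Ideal (MvPolynomial (Fin n) K), IsMonomialPrime p ∧
    (∀ m : ℕ, 1 ≤ m → m ≤ k →
      associatedPrimes (MvPolynomial (Fin n) K) (MvPolynomial (Fin n) K ⧸ I ^ m) =
        I.minimalPrimes) ∧
    (∀ m : ℕ, k + 1 ≤ m →
      associatedPrimes (MvPolynomial (Fin n) K) (MvPolynomial (Fin n) K ⧸ I ^ m) ⊆
        I.minimalPrimes ∪ {p})

namespace NNTFAux

variable {K : Type*} [Field K] {n : ℕ}

/-- The set of monomials with exponent vectors in `S`. -/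
def Mon (K : Type*) [Field K] {n : ℕ} (S : Set (Fin n →₀ ℕ)) : Set (MvPolynomial (Fin n) K) :=
  (fun m => monomial m (1 : K)) '' S

lemma mem_span_Mon {S : Set (Fin n →₀ ℕ)} {f : MvPolynomial (Fin n) K} :
    f ∈ Ideal.span (Mon K S) ↔ ∀ d ∈ f.support, ∃ u ∈ S, u ≤ d :=
  mem_ideal_span_monomial_image

lemma span_Mon_mul (S T : Set (Fin n →₀ ℕ)) :
    Ideal.span (Mon K S) * Ideal.span (Mon K T)
      = Ideal.span (Mon K (Set.image2 (· + ·) S T)) := by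
  rw [Ideal.span_mul_span']
  congr 1
  rw [Mon, Mon, Mon]
  ext x
  simp only [Set.mem_mul, Set.mem_image, Set.mem_image2]
  constructor
  · rintro ⟨_, ⟨a, ha, rfl⟩, _, ⟨b, hb, rfl⟩, rfl⟩
    exact ⟨a + b, ⟨a, ha, b, hb, rfl⟩, by rw [monomial_mul, one_mul]⟩
  · rintro ⟨_, ⟨a, ha, b, hb, rfl⟩, rfl⟩
    exact ⟨_, ⟨a, ha, rfl⟩, _, ⟨b, hb, rfl⟩, by rw [monomial_mul, one_mul]⟩

lemma span_Mon_singleton (c : Fin n →₀ ℕ) :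
    Ideal.span {(monomial c 1 : MvPolynomial (Fin n) K)} = Ideal.span (Mon K {c}) := by
  rw [Mon, Set.image_singleton]

lemma support_monomial_mul (t : Fin n →₀ ℕ) (f : MvPolynomial (Fin n) K) (w : Fin n →₀ ℕ) :
    w ∈ (monomial t 1 * f).support ↔ ∃ d ∈ f.support, w = t + d := by
  constructor
  · intro hw
    rw [mem_support_iff, coeff_monomial_mul'] at hw
    by_cases hle : t ≤ w
    · refine ⟨w - t, ?_, ?_⟩
      · rw [mem_support_iff]; intro h0; rw [if_pos hle, h0, mul_zero] at hw; exact hw rfl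
      · rw [add_tsub_cancel_of_le hle]
    · rw [if_neg hle] at hw; exact absurd rfl hw
  · rintro ⟨d, hd, rfl⟩
    rw [mem_support_iff, coeff_monomial_mul, one_mul]
    exact mem_support_iff.mp hd

lemma deg_lt {a b : Fin n →₀ ℕ} (hle : a ≤ b) (hne : a ≠ b) :
    (a.sum fun _ v => v) < (b.sum fun _ v => v) := by
  have h1 : ∀ i, a i ≤ b i := fun i => Finsupp.le_def.mp hle i
  have hsup : a.support ⊆ b.support := fun i hi => by
    rw [Finsupp.mem_support_iff] at hi ⊢
    intro h0; exact hi (Nat.le_zero.mp (h0 ▸ h1 i))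
  rw [Finsupp.sum, Finsupp.sum]
  have hA : (∑ i ∈ a.support, a i) = ∑ i ∈ b.support, a i :=
    Finset.sum_subset hsup (fun i _ hi => Finsupp.notMem_support_iff.mp hi)
  rw [hA]
  obtain ⟨i, hi⟩ : ∃ i, a i ≠ b i := by
    by_contra hcon; push_neg at hcon; exact hne (Finsupp.ext hcon)
  have hib : i ∈ b.support := by
    rw [Finsupp.mem_support_iff]
    intro h0; exact hi (by rw [h0]; exact Nat.le_zero.mp (h0 ▸ h1 i))
  exact Finset.sum_lt_sum (fun j _ => h1 j) ⟨i, hib, lt_of_le_of_ne (h1 i) hi⟩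

lemma exists_minGen {I : Ideal (MvPolynomial (Fin n) K)} {g : Fin n →₀ ℕ}
    (hg : monomial g (1 : K) ∈ I) : ∃ m', IsMinGen I m' ∧ m' ≤ g := by
  generalize hN : (g.sum fun _ v => v) = N
  induction N using Nat.strong_induction_on generalizing g with
  | _ N ih =>
    by_cases hmin : IsMinGen I g
    · exact ⟨g, hmin, le_refl g⟩
    · rw [IsMinGen] at hmin
      push_neg at hmin
      obtain ⟨m', hle, hne, hmem⟩ := hmin hg
      obtain ⟨m'', hm'', hle'⟩ := ih _ (hN ▸ deg_lt hle hne) hmem rfl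
      exact ⟨m'', hm'', le_trans hle' hle⟩

/-- `I` is generated by monomials whose supports avoid `h.support`. -/
def GoodGen (h : Fin n →₀ ℕ) (I : Ideal (MvPolynomial (Fin n) K)) : Prop :=
  ∃ S : Set (Fin n →₀ ℕ), (∀ g ∈ S, Disjoint h.support g.support) ∧ I = Ideal.span (Mon K S)

lemma goodGen_of_monomialIdeal {I : Ideal (MvPolynomial (Fin n) K)} (hmon : IsMonomialIdeal I)
    (h : Fin n →₀ ℕ) (hgcd : ∀ m : Fin n →₀ ℕ, IsMinGen I m → Disjoint h.support m.support) :
    GoodGen h I := by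
  refine ⟨{g | IsMinGen I g}, fun g hg => hgcd g hg, ?_⟩
  obtain ⟨G, hG⟩ := hmon
  apply le_antisymm
  · conv_lhs => rw [hG]
    apply Ideal.span_le.mpr
    rintro _ ⟨g, hgG, rfl⟩
    have hgI : monomial g (1 : K) ∈ I := hG ▸ Ideal.subset_span ⟨g, hgG, rfl⟩
    obtain ⟨m', hm', hle⟩ := exists_minGen hgI
    rw [SetLike.mem_coe]
    show monomial g (1:K) ∈ Ideal.span (Mon K {g | IsMinGen I g})
    have : (monomial g (1:K)) = monomial (g - m') 1 * monomial m' 1 := by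
      rw [monomial_mul, one_mul, tsub_add_cancel_of_le hle]
    rw [this]
    exact Ideal.mul_mem_left _ _ (Ideal.subset_span ⟨m', hm', rfl⟩)
  · apply Ideal.span_le.mpr
    rintro _ ⟨g, hgS, rfl⟩
    exact (hgS.1 : monomial g (1:K) ∈ I)

lemma goodGen_top (h : Fin n →₀ ℕ) : GoodGen h (⊤ : Ideal (MvPolynomial (Fin n) K)) := by
  refine ⟨{0}, by simp, ?_⟩
  rw [Mon, Set.image_singleton, monomial_zero', C_1, Ideal.span_singleton_one]

lemma goodGen_mul {h : Fin n →₀ ℕ} {I J : Ideal (MvPolynomial (Fin n) K)}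
    (hI : GoodGen h I) (hJ : GoodGen h J) : GoodGen h (I * J) := by
  obtain ⟨S, hS, rfl⟩ := hI
  obtain ⟨T, hT, rfl⟩ := hJ
  refine ⟨Set.image2 (· + ·) S T, ?_, span_Mon_mul S T⟩
  rintro _ ⟨a, ha, b, hb, rfl⟩
  rw [Finset.disjoint_left]
  intro i hih hiab
  have := Finsupp.support_add hiab
  rw [Finset.mem_union] at this
  rcases this with hc | hc
  · exact (Finset.disjoint_left.mp (hS a ha)) hih hc
  · exact (Finset.disjoint_left.mp (hT b hb)) hih hc

lemma goodGen_pow {h : Fin n →₀ ℕ} {I : Ideal (MvPolynomial (Fin n) K)}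
    (hI : GoodGen h I) (m : ℕ) : GoodGen h (I ^ m) := by
  induction m with
  | zero => rw [pow_zero, Ideal.one_eq_top]; exact goodGen_top h
  | succ k ih => rw [pow_succ]; exact goodGen_mul ih hI

/-- Regularity: multiplying by a monomial supported in `h.support` can be cancelled. -/
lemma regular_of_goodGen {h : Fin n →₀ ℕ} {S : Set (Fin n →₀ ℕ)}
    (hS : ∀ g ∈ S, Disjoint h.support g.support) {t : Fin n →₀ ℕ}
    (ht : t.support ⊆ h.support) {f : MvPolynomial (Fin n) K}
    (hm : monomial t 1 * f ∈ Ideal.span (Mon K S)) : f ∈ Ideal.span (Mon K S) := by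
  rw [mem_span_Mon] at hm ⊢
  intro d hd
  have hmem : t + d ∈ (monomial t (1:K) * f).support := by
    rw [mem_support_iff, coeff_monomial_mul, one_mul]
    exact mem_support_iff.mp hd
  obtain ⟨u, huS, hle⟩ := hm _ hmem
  refine ⟨u, huS, Finsupp.le_def.mpr fun i => ?_⟩
  by_cases hih : i ∈ h.support
  · have : u i = 0 := Finsupp.notMem_support_iff.mp (Finset.disjoint_left.mp (hS u huS) hih)
    rw [this]; exact Nat.zero_le _
  · have hti : t i = 0 := Finsupp.notMem_support_iff.mp (fun hc => hih (ht hc))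
    have := Finsupp.le_def.mp hle i
    rw [Finsupp.add_apply, hti, zero_add] at this
    exact this

lemma sub_retract_mem (j : Fin n) (f : MvPolynomial (Fin n) K) :
    f - aeval (fun i => if i = j then 0 else X i) f ∈ Ideal.span {(X j : MvPolynomial (Fin n) K)} := by
  induction f using MvPolynomial.induction_on with
  | C a => simp
  | add p q hp hq =>
      have : p + q - aeval (fun i => if i = j then 0 else X i) (p + q)
          = (p - aeval (fun i => if i = j then 0 else X i) p)
            + (q - aeval (fun i => if i = j then 0 else X i) q) := by
        rw [map_add]; ring
      rw [this]; exact add_mem hp hq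
  | mul_X p i hp =>
      by_cases hij : i = j
      · subst hij
        have : p * X i - aeval (fun i' => if i' = i then 0 else X i') (p * X i)
            = p * X i := by simp
        rw [this]
        exact Ideal.mem_span_singleton.mpr (Dvd.intro_left p rfl)
      · have : p * X i - aeval (fun i' => if i' = j then 0 else X i') (p * X i)
            = (p - aeval (fun i' => if i' = j then 0 else X i') p) * X i := by
          rw [map_mul, aeval_X, if_neg hij]; ring
        rw [this]
        exact Ideal.mul_mem_right _ _ hp

lemma spanX_isPrime (j : Fin n) :
    (Ideal.span {(X j : MvPolynomial (Fin n) K)}).IsPrime := by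
  have hker : RingHom.ker ((aeval (fun i => if i = j then 0 else X i)
      : MvPolynomial (Fin n) K →ₐ[K] MvPolynomial (Fin n) K)
        : MvPolynomial (Fin n) K →+* MvPolynomial (Fin n) K)
      = Ideal.span {(X j : MvPolynomial (Fin n) K)} := by
    ext f
    rw [RingHom.mem_ker]
    constructor
    · intro hf
      have h2 := sub_retract_mem j f
      have hf' : (aeval (fun i => if i = j then 0 else X i)) f = 0 := hf
      rwa [hf', sub_zero] at h2
    · intro hf
      obtain ⟨g, rfl⟩ := Ideal.mem_span_singleton.mp hf
      simp
  rw [← hker]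
  exact RingHom.ker_isPrime _

lemma prime_X (j : Fin n) : Prime (X j : MvPolynomial (Fin n) K) :=
  (Ideal.span_singleton_prime (X_ne_zero j)).mp (spanX_isPrime j)

/-- Membership in the annihilator of a cyclic quotient. -/
lemma mem_ann_iff (I : Ideal (MvPolynomial (Fin n) K)) (f r : MvPolynomial (Fin n) K) :
    r ∈ (⊥ : Submodule (MvPolynomial (Fin n) K) (MvPolynomial (Fin n) K ⧸ I)).colon
        {Ideal.Quotient.mk I f}
      ↔ r * f ∈ I := by
  rw [Submodule.mem_colon_singleton, Submodule.mem_bot]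
  have : r • (Ideal.Quotient.mk I f) = Ideal.Quotient.mk I (r * f) := rfl
  rw [this, Ideal.Quotient.eq_zero_iff_mem]

lemma isAssociatedPrime_iff (I p : Ideal (MvPolynomial (Fin n) K)) :
    IsAssociatedPrime p ((MvPolynomial (Fin n) K) ⧸ I)
      ↔ p.IsPrime ∧ ∃ f, ∀ r, (r ∈ p ↔ r * f ∈ I) := by
  constructor
  · intro hp'
    obtain ⟨hp, x, hx⟩ := _root_.isAssociatedPrime_iff.mp hp'
    obtain ⟨f, rfl⟩ := Ideal.Quotient.mk_surjective x
    exact ⟨hp, f, fun r => by rw [hx, mem_ann_iff]⟩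
  · rintro ⟨hp, f, hf⟩
    refine _root_.isAssociatedPrime_iff.mpr ⟨hp, Ideal.Quotient.mk I f, ?_⟩
    ext r
    rw [mem_ann_iff]
    exact hf r

/-- Associated primes of a quotient by an intersection. -/
lemma ass_inf (A B p : Ideal (MvPolynomial (Fin n) K))
    (hp : IsAssociatedPrime p ((MvPolynomial (Fin n) K) ⧸ (A ⊓ B))) :
    IsAssociatedPrime p ((MvPolynomial (Fin n) K) ⧸ A)
      ∨ IsAssociatedPrime p ((MvPolynomial (Fin n) K) ⧸ B) := by
  rw [isAssociatedPrime_iff] at hp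
  obtain ⟨hprime, f, hf⟩ := hp
  set a := (⊥ : Submodule (MvPolynomial (Fin n) K) (MvPolynomial (Fin n) K ⧸ A)).colon
      {Ideal.Quotient.mk A f} with ha
  set b := (⊥ : Submodule (MvPolynomial (Fin n) K) (MvPolynomial (Fin n) K ⧸ B)).colon
      {Ideal.Quotient.mk B f} with hb
  have hmema : ∀ r, r ∈ a ↔ r * f ∈ A := fun r => by rw [ha, mem_ann_iff]
  have hmemb : ∀ r, r ∈ b ↔ r * f ∈ B := fun r => by rw [hb, mem_ann_iff]
  have hab_le_p : a * b ≤ p := by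
    rw [Ideal.mul_le]
    intro r hr s hs
    rw [hf, Ideal.mem_inf]
    constructor
    · have : r * s * f = s * (r * f) := by ring
      rw [this]; exact Ideal.mul_mem_left _ _ ((hmema r).mp hr)
    · have : r * s * f = r * (s * f) := by ring
      rw [this]; exact Ideal.mul_mem_left _ _ ((hmemb s).mp hs)
  rcases hprime.mul_le.mp hab_le_p with hle | hle
  · left
    refine _root_.isAssociatedPrime_iff.mpr ⟨hprime, Ideal.Quotient.mk A f, le_antisymm ?_ hle⟩
    intro r hr
    rw [← ha] at *
    exact (hmema r).mpr (Ideal.mem_inf.mp ((hf r).mp hr)).1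
  · right
    refine _root_.isAssociatedPrime_iff.mpr ⟨hprime, Ideal.Quotient.mk B f, le_antisymm ?_ hle⟩
    intro r hr
    rw [← hb] at *
    exact (hmemb r).mpr (Ideal.mem_inf.mp ((hf r).mp hr)).2

lemma monomial_eq_prod (c : Fin n →₀ ℕ) :
    (monomial c 1 : MvPolynomial (Fin n) K) = ∏ j ∈ c.support, X j ^ c j := by
  rw [monomial_eq, C_1, one_mul, Finsupp.prod]

/-- Associated primes of principal monomial ideals are generated by single variables. -/
lemma ass_principal_monomial (c : Fin n →₀ ℕ) (p : Ideal (MvPolynomial (Fin n) K))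
    (hp : IsAssociatedPrime p
      ((MvPolynomial (Fin n) K) ⧸ (Ideal.span {(monomial c 1 : MvPolynomial (Fin n) K)}))) :
    ∃ j ∈ c.support, p = Ideal.span {(X j : MvPolynomial (Fin n) K)} := by
  letI : NormalizationMonoid (MvPolynomial (Fin n) K) :=
    UniqueFactorizationMonoid.normalizationMonoid.toNormalizationMonoid
  letI : GCDMonoid (MvPolynomial (Fin n) K) := UniqueFactorizationMonoid.toGCDMonoid _
  obtain ⟨hprime, x, hx⟩ := _root_.isAssociatedPrime_iff.mp hp
  obtain ⟨f, rfl⟩ := Ideal.Quotient.mk_surjective x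
  set m : MvPolynomial (Fin n) K := monomial c 1 with hm
  have hm0 : m ≠ 0 := fun hc => one_ne_zero (monomial_eq_zero.mp (hm ▸ hc))
  have hmem : ∀ r, r ∈ p ↔ m ∣ r * f := by
    intro r
    rw [hx, mem_ann_iff, Ideal.mem_span_singleton]
  set g := gcd m f with hg
  have hg0 : g ≠ 0 := fun hc => hm0 ((gcd_eq_zero_iff m f).mp (hg ▸ hc)).1
  obtain ⟨m', hm'⟩ : g ∣ m := gcd_dvd_left m f
  obtain ⟨f', hf'⟩ : g ∣ f := gcd_dvd_right m f
  have hrel : IsRelPrime m' f' := by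
    intro d hdm' hdf'
    have h1 : g * d ∣ m := by rw [hm']; exact mul_dvd_mul_left g hdm'
    have h2 : g * d ∣ f := by rw [hf']; exact mul_dvd_mul_left g hdf'
    have h3 : g * d ∣ g * 1 := by rw [mul_one]; exact dvd_gcd h1 h2
    exact isUnit_of_dvd_one ((mul_dvd_mul_iff_left hg0).mp h3)
  have key : ∀ r, m ∣ r * f ↔ m' ∣ r := by
    intro r
    constructor
    · intro hd
      rw [hm', hf'] at hd
      have : g * m' ∣ g * (r * f') := by
        rw [show g * (r * f') = r * (g * f') by ring]; exact hd
      exact hrel.dvd_of_dvd_mul_right ((mul_dvd_mul_iff_left hg0).mp this)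
    · rintro ⟨w, rfl⟩
      rw [hm', hf']
      exact ⟨w * f', by ring⟩
  have hpm' : p = Ideal.span {m'} := by
    ext r
    rw [hmem, key, Ideal.mem_span_singleton]
  have hm'0 : m' ≠ 0 := by
    rintro rfl; rw [mul_zero] at hm'; exact hm0 hm'
  have hm'prime : Prime m' :=
    (Ideal.span_singleton_prime hm'0).mp (hpm' ▸ hprime)
  have hdvd : m' ∣ m := ⟨g, by rw [hm', mul_comm]⟩
  rw [hm, monomial_eq_prod] at hdvd
  obtain ⟨j, hj, hdvd2⟩ := hm'prime.exists_mem_finset_dvd hdvd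
  have hdvdX : m' ∣ X j := hm'prime.dvd_of_dvd_pow hdvd2
  obtain ⟨w, hw⟩ := hdvdX
  rcases (prime_X j).irreducible.isUnit_or_isUnit hw with hu | hu
  · exact absurd hu hm'prime.not_unit
  · refine ⟨j, hj, ?_⟩
    rw [hpm']
    exact Ideal.span_singleton_eq_span_singleton.mpr ⟨hu.unit, by rw [IsUnit.unit_spec, ← hw]⟩

lemma mem_span_X_iff_support {j : Fin n} {r : MvPolynomial (Fin n) K} :
    r ∈ Ideal.span {(X j : MvPolynomial (Fin n) K)} ↔ ∀ d ∈ r.support, d j ≠ 0 := by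
  have := mem_ideal_span_X_image (x := r) (s := ({j} : Set (Fin n)))
  rw [Set.image_singleton] at this
  rw [this]
  constructor
  · intro H d hd; obtain ⟨i, hi, hne⟩ := H d hd; rwa [Set.mem_singleton_iff.mp hi] at hne
  · intro H d hd; exact ⟨j, rfl, H d hd⟩

/-- The product with a coprime principal monomial ideal is an intersection. -/
lemma mul_eq_inf {h : Fin n →₀ ℕ} {S : Set (Fin n →₀ ℕ)}
    (hS : ∀ g ∈ S, Disjoint h.support g.support) {c : Fin n →₀ ℕ}
    (hcs : c.support ⊆ h.support) :
    Ideal.span {(monomial c 1 : MvPolynomial (Fin n) K)} * Ideal.span (Mon K S)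
      = Ideal.span {(monomial c 1 : MvPolynomial (Fin n) K)} ⊓ Ideal.span (Mon K S) := by
  refine le_antisymm Ideal.mul_le_inf ?_
  intro f hf
  rw [Ideal.mem_inf] at hf
  obtain ⟨hf1, hf2⟩ := hf
  rw [span_Mon_singleton, mem_span_Mon] at hf1
  rw [mem_span_Mon] at hf2
  rw [span_Mon_singleton, span_Mon_mul, mem_span_Mon]
  intro d hd
  obtain ⟨c', hc', hcd⟩ := hf1 d hd
  rw [Set.mem_singleton_iff] at hc'; rw [hc'] at hcd
  obtain ⟨u, huS, hud⟩ := hf2 d hd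
  refine ⟨c + u, Set.mem_image2_of_mem rfl huS, Finsupp.le_def.mpr fun i => ?_⟩
  rw [Finsupp.add_apply]
  by_cases hih : i ∈ h.support
  · have hu0 : u i = 0 := Finsupp.notMem_support_iff.mp (Finset.disjoint_left.mp (hS u huS) hih)
    rw [hu0, add_zero]; exact Finsupp.le_def.mp hcd i
  · have hc0 : c i = 0 := Finsupp.notMem_support_iff.mp (fun hc => hih (hcs hc))
    rw [hc0, zero_add]; exact Finsupp.le_def.mp hud i

/-- Key lemma: associated primes of `(x^c) * J`. -/
lemma key_ass {h : Fin n →₀ ℕ} {S : Set (Fin n →₀ ℕ)}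
    (hS : ∀ g ∈ S, Disjoint h.support g.support) (hSne : S.Nonempty)
    {c : Fin n →₀ ℕ} (hc : c.support = h.support) :
    associatedPrimes (MvPolynomial (Fin n) K)
        ((MvPolynomial (Fin n) K) ⧸ (Ideal.span {(monomial c 1 : MvPolynomial (Fin n) K)}
          * Ideal.span (Mon K S)))
      = associatedPrimes (MvPolynomial (Fin n) K)
          ((MvPolynomial (Fin n) K) ⧸ Ideal.span (Mon K S))
        ∪ (fun j => Ideal.span {(X j : MvPolynomial (Fin n) K)}) '' (h.support : Set (Fin n)) := by
  have hcJ : Ideal.span {(monomial c 1 : MvPolynomial (Fin n) K)} * Ideal.span (Mon K S)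
      = Ideal.span (Mon K ((c + ·) '' S)) := by
    rw [span_Mon_singleton, span_Mon_mul]
    congr 1
    rw [Set.image2_singleton_left]
  ext p
  simp only [Set.mem_union, Set.mem_image, Finset.coe_sort_coe, Finset.mem_coe]
  constructor
  · intro hp
    rw [AssociatedPrimes.mem_iff] at hp
    rw [mul_eq_inf hS (le_of_eq hc)] at hp
    rcases ass_inf _ _ _ hp with hleft | hright
    · obtain ⟨j, hj, rfl⟩ := ass_principal_monomial c p hleft
      right
      exact ⟨j, hc ▸ hj, rfl⟩
    · left; exact hright
  · rintro (hass | ⟨j, hj, rfl⟩)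
    · rw [AssociatedPrimes.mem_iff] at hass ⊢
      rw [isAssociatedPrime_iff] at hass ⊢
      obtain ⟨hprime, f, hf⟩ := hass
      refine ⟨hprime, monomial c 1 * f, fun r => ?_⟩
      rw [hf]
      constructor
      · intro hrf
        have : r * (monomial c 1 * f) = monomial c 1 * (r * f) := by ring
        rw [this]
        exact Ideal.mul_mem_mul (Ideal.mem_span_singleton_self _) hrf
      · intro hmem
        rw [mem_span_Mon]
        intro e he
        have h1 : r * (monomial c (1:K) * f) = monomial c 1 * (r * f) := by ring
        rw [h1, hcJ, mem_span_Mon] at hmem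
        have h2 : c + e ∈ (monomial c (1:K) * (r * f)).support :=
          (support_monomial_mul c (r*f) (c+e)).mpr ⟨e, he, rfl⟩
        obtain ⟨w, hw, hle⟩ := hmem _ h2
        obtain ⟨u, huS, rfl⟩ := hw
        exact ⟨u, huS, (add_le_add_iff_left c).mp hle⟩
    · rw [AssociatedPrimes.mem_iff, isAssociatedPrime_iff]
      obtain ⟨g, hgS⟩ := hSne
      have hgj : g j = 0 := Finsupp.notMem_support_iff.mp
        (Finset.disjoint_left.mp (hS g hgS) hj)
      have hcj : 1 ≤ c j := by
        have : j ∈ c.support := hc ▸ hj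
        exact Nat.one_le_iff_ne_zero.mpr (Finsupp.mem_support_iff.mp this)
      set t : Fin n →₀ ℕ := c - Finsupp.single j 1 + g with hts
      have htval : ∀ i, t i = c i - (if j = i then 1 else 0) + g i := by
        intro i
        rw [hts, Finsupp.add_apply, Finsupp.tsub_apply, Finsupp.single_apply]
      refine ⟨spanX_isPrime j, monomial t 1, fun r => ?_⟩
      rw [mem_span_X_iff_support, hcJ, mem_span_Mon]
      have hsupp : ∀ w, w ∈ (r * monomial t (1:K)).support ↔ ∃ d ∈ r.support, w = t + d := by
        intro w; rw [mul_comm]; exact support_monomial_mul t r w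
      constructor
      · intro H w hw
        obtain ⟨d, hd, rfl⟩ := (hsupp w).mp hw
        have hdj : d j ≠ 0 := H d hd
        refine ⟨c + g, Set.mem_image_of_mem _ hgS, Finsupp.le_def.mpr fun i => ?_⟩
        rw [Finsupp.add_apply, Finsupp.add_apply, htval i]
        by_cases hij : j = i
        · subst hij
          rw [if_pos rfl, hgj]
          omega
        · rw [if_neg hij]
          omega
      · intro H d hd hdj0
        have hmem : t + d ∈ (r * monomial t (1:K)).support := (hsupp _).mpr ⟨d, hd, rfl⟩
        obtain ⟨w, hw, hle⟩ := H _ hmem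
        obtain ⟨u, huS, rfl⟩ := hw
        have huj : u j = 0 := Finsupp.notMem_support_iff.mp
          (Finset.disjoint_left.mp (hS u huS) hj)
        have := Finsupp.le_def.mp hle j
        rw [Finsupp.add_apply, Finsupp.add_apply, htval j, if_pos rfl, huj, hgj] at this
        omega

lemma X_dvd_monomial_iff {j : Fin n} {d : Fin n →₀ ℕ} :
    (X j : MvPolynomial (Fin n) K) ∣ monomial d 1 ↔ d j ≠ 0 := by
  have : (X j : MvPolynomial (Fin n) K) = monomial (Finsupp.single j 1) 1 := rfl
  rw [this, monomial_dvd_monomial]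
  constructor
  · rintro ⟨h1, -⟩
    rcases h1 with h | h
    · exact absurd h one_ne_zero
    · have := Finsupp.le_def.mp h j
      rw [Finsupp.single_apply, if_pos rfl] at this
      omega
  · intro hd
    refine ⟨Or.inr (Finsupp.le_def.mpr fun i => ?_), dvd_refl 1⟩
    rw [Finsupp.single_apply]
    by_cases hij : j = i
    · subst hij; rw [if_pos rfl]; omega
    · rw [if_neg hij]; omega

lemma exists_X_mem_of_monomial_mem {q : Ideal (MvPolynomial (Fin n) K)} (hq : q.IsPrime)
    {c : Fin n →₀ ℕ} (hmem : (monomial c 1 : MvPolynomial (Fin n) K) ∈ q) :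
    ∃ j ∈ c.support, (X j : MvPolynomial (Fin n) K) ∈ q := by
  rw [monomial_eq_prod] at hmem
  haveI := hq
  obtain ⟨j, hj, hmem2⟩ := Ideal.IsPrime.prod_mem_iff.mp hmem
  exact ⟨j, hj, hq.mem_of_pow_mem _ hmem2⟩

/-- A variable from `h.support` is not in any minimal prime of a good ideal. -/
lemma X_not_mem_minimal {h : Fin n →₀ ℕ} {S : Set (Fin n →₀ ℕ)}
    (hS : ∀ g ∈ S, Disjoint h.support g.support) {i : Fin n} (hi : i ∈ h.support)
    {p : Ideal (MvPolynomial (Fin n) K)}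
    (hp : p ∈ (Ideal.span (Mon K S)).minimalPrimes) :
    (X i : MvPolynomial (Fin n) K) ∉ p := by
  intro hXi
  have hpp : p.IsPrime := hp.1.1
  have h1p : (1 : MvPolynomial (Fin n) K) ∉ p :=
    fun h1 => hpp.ne_top ((Ideal.eq_top_iff_one p).mpr h1)
  set T : Submonoid (MvPolynomial (Fin n) K) :=
    { carrier := {r | ∃ s, s ∉ p ∧ ∃ k : ℕ, r = s * X i ^ k}
      mul_mem' := by
        rintro r1 r2 ⟨s1, hs1, k1, rfl⟩ ⟨s2, hs2, k2, rfl⟩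
        refine ⟨s1 * s2, fun hc => ?_, k1 + k2, by ring⟩
        rcases hpp.mem_or_mem hc with hcc | hcc
        · exact hs1 hcc
        · exact hs2 hcc
      one_mem' := ⟨1, h1p, 0, by ring⟩ } with hT
  have hdisj : Disjoint ((Ideal.span (Mon K S) : Ideal (MvPolynomial (Fin n) K))
      : Set (MvPolynomial (Fin n) K)) (T : Set (MvPolynomial (Fin n) K)) := by
    rw [Set.disjoint_left]
    rintro r hrI ⟨s, hs, k, rfl⟩
    apply hs
    apply hp.1.2
    have : s * X i ^ k = monomial (Finsupp.single i k) 1 * s := by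
      rw [X_pow_eq_monomial]; ring
    rw [SetLike.mem_coe] at hrI
    rw [this] at hrI
    exact regular_of_goodGen hS (le_trans Finsupp.support_single_subset
      (by simpa using hi)) hrI
  obtain ⟨q, hq_prime, hIq, hqdisj⟩ := Ideal.exists_le_prime_disjoint _ T hdisj
  have hqp : q ≤ p := by
    intro r hrq
    by_contra hrp
    exact Set.disjoint_left.mp hqdisj hrq ⟨r, hrp, 0, by ring⟩
  have hpq : p ≤ q := hp.2 ⟨hq_prime, hIq⟩ hqp
  exact Set.disjoint_left.mp hqdisj (hpq hXi) ⟨1, h1p, 1, by ring⟩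

/-- Minimal primes of `(x^h) * J`. -/
lemma min_primes_eq {h : Fin n →₀ ℕ} {S : Set (Fin n →₀ ℕ)}
    (hS : ∀ g ∈ S, Disjoint h.support g.support) (hSne : S.Nonempty) :
    (Ideal.span {(monomial h 1 : MvPolynomial (Fin n) K)} * Ideal.span (Mon K S)).minimalPrimes
      = (Ideal.span (Mon K S)).minimalPrimes
        ∪ (fun j => Ideal.span {(X j : MvPolynomial (Fin n) K)}) '' (h.support : Set (Fin n)) := by
  set a : Ideal (MvPolynomial (Fin n) K) :=
    Ideal.span {(monomial h 1 : MvPolynomial (Fin n) K)} with haa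
  set J : Ideal (MvPolynomial (Fin n) K) := Ideal.span (Mon K S) with hJJ
  have hXa : ∀ j ∈ h.support, a ≤ Ideal.span {(X j : MvPolynomial (Fin n) K)} := by
    intro j hj
    rw [haa, Ideal.span_le, Set.singleton_subset_iff, SetLike.mem_coe,
      Ideal.mem_span_singleton]
    exact X_dvd_monomial_iff.mpr (Finsupp.mem_support_iff.mp hj)
  have hgJ : ∀ {q : Ideal (MvPolynomial (Fin n) K)} (j : Fin n), j ∈ h.support →
      J ≤ q → q ≤ Ideal.span {(X j : MvPolynomial (Fin n) K)} → False := by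
    intro q j hj hJq hqX
    obtain ⟨g, hgS⟩ := hSne
    have h1 : (monomial g 1 : MvPolynomial (Fin n) K) ∈ J :=
      Ideal.subset_span ⟨g, hgS, rfl⟩
    have h2 := Ideal.mem_span_singleton.mp (hqX (hJq h1))
    rw [X_dvd_monomial_iff] at h2
    exact h2 (Finsupp.notMem_support_iff.mp (Finset.disjoint_left.mp (hS g hgS) hj))
  ext p
  simp only [Set.mem_union, Set.mem_image, Finset.coe_sort_coe, Finset.mem_coe]
  constructor
  · intro hp
    have hpp : p.IsPrime := hp.1.1
    rcases hpp.mul_le.mp hp.1.2 with hap | hJp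
    · have hmono : (monomial h 1 : MvPolynomial (Fin n) K) ∈ p :=
        hap (Ideal.mem_span_singleton_self _)
      obtain ⟨j, hj, hXj⟩ := exists_X_mem_of_monomial_mem hpp hmono
      right
      refine ⟨j, hj, ?_⟩
      have hle1 : Ideal.span {(X j : MvPolynomial (Fin n) K)} ≤ p := by
        rw [Ideal.span_le, Set.singleton_subset_iff]; exact hXj
      have hle2 : p ≤ Ideal.span {(X j : MvPolynomial (Fin n) K)} :=
        hp.2 ⟨spanX_isPrime j, le_trans Ideal.mul_le_left (hXa j hj)⟩ hle1
      exact le_antisymm hle1 hle2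
    · left
      refine ⟨⟨hpp, hJp⟩, fun q hq hqp => ?_⟩
      exact hp.2 ⟨hq.1, le_trans Ideal.mul_le_right hq.2⟩ hqp
  · rintro (hp | ⟨j, hj, rfl⟩)
    · refine ⟨⟨hp.1.1, le_trans Ideal.mul_le_right hp.1.2⟩, fun q hq hqp => ?_⟩
      rcases hq.1.mul_le.mp hq.2 with haq | hJq
      · have hmono : (monomial h 1 : MvPolynomial (Fin n) K) ∈ q :=
          haq (Ideal.mem_span_singleton_self _)
        obtain ⟨i, hi, hXi⟩ := exists_X_mem_of_monomial_mem hq.1 hmono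
        exact absurd (hqp hXi) (X_not_mem_minimal hS hi hp)
      · exact hp.2 ⟨hq.1, hJq⟩ hqp
    · refine ⟨⟨spanX_isPrime j, le_trans Ideal.mul_le_left (hXa j hj)⟩, fun q hq hqp => ?_⟩
      rcases hq.1.mul_le.mp hq.2 with haq | hJq
      · have hmono : (monomial h 1 : MvPolynomial (Fin n) K) ∈ q :=
          haq (Ideal.mem_span_singleton_self _)
        obtain ⟨i, hi, hXi⟩ := exists_X_mem_of_monomial_mem hq.1 hmono
        have h2 := Ideal.mem_span_singleton.mp (hqp hXi)
        have : (X i : MvPolynomial (Fin n) K) = monomial (Finsupp.single i 1) 1 := rfl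
        rw [this, X_dvd_monomial_iff, Finsupp.single_apply] at h2
        by_cases hij : i = j
        · subst hij
          rw [Ideal.span_le, Set.singleton_subset_iff]
          exact hXi
        · rw [if_neg hij] at h2; exact absurd rfl h2
      · exact (hgJ j hj hJq hqp).elim

lemma spanX_not_assPrime {h : Fin n →₀ ℕ} {S : Set (Fin n →₀ ℕ)}
    (hS : ∀ g ∈ S, Disjoint h.support g.support) {j : Fin n} (hj : j ∈ h.support) :
    Ideal.span {(X j : MvPolynomial (Fin n) K)}
      ∉ associatedPrimes (MvPolynomial (Fin n) K)
          ((MvPolynomial (Fin n) K) ⧸ Ideal.span (Mon K S)) := by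
  intro hmem
  rw [AssociatedPrimes.mem_iff, isAssociatedPrime_iff] at hmem
  obtain ⟨hprime, f, hf⟩ := hmem
  have hXf : (X j : MvPolynomial (Fin n) K) * f ∈ Ideal.span (Mon K S) :=
    (hf (X j)).mp (Ideal.mem_span_singleton_self _)
  have hXm : (X j : MvPolynomial (Fin n) K) = monomial (Finsupp.single j 1) 1 := rfl
  rw [hXm] at hXf
  have hfI : f ∈ Ideal.span (Mon K S) :=
    regular_of_goodGen hS (le_trans Finsupp.support_single_subset (by simpa using hj)) hXf
  have h1 : (1 : MvPolynomial (Fin n) K) ∈ Ideal.span {(X j : MvPolynomial (Fin n) K)} :=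
    (hf 1).mpr (by rwa [one_mul])
  exact hprime.ne_top ((Ideal.eq_top_iff_one _).mpr h1)

lemma spanX_not_min {h : Fin n →₀ ℕ} {S : Set (Fin n →₀ ℕ)}
    (hS : ∀ g ∈ S, Disjoint h.support g.support) (hSne : S.Nonempty) {j : Fin n}
    (hj : j ∈ h.support) :
    Ideal.span {(X j : MvPolynomial (Fin n) K)} ∉ (Ideal.span (Mon K S)).minimalPrimes := by
  intro hmem
  obtain ⟨g, hgS⟩ := hSne
  have h1 : (monomial g 1 : MvPolynomial (Fin n) K) ∈ Ideal.span (Mon K S) :=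
    Ideal.subset_span ⟨g, hgS, rfl⟩
  have h2 := Ideal.mem_span_singleton.mp (hmem.1.2 h1)
  rw [X_dvd_monomial_iff] at h2
  exact h2 (Finsupp.notMem_support_iff.mp (Finset.disjoint_left.mp (hS g hgS) hj))

lemma S_nonempty_of_ne_bot {S : Set (Fin n →₀ ℕ)}
    (h : Ideal.span (Mon K S) ≠ ⊥) : S.Nonempty := by
  rw [Set.nonempty_iff_ne_empty]
  rintro rfl
  apply h
  rw [Mon, Set.image_empty, Ideal.span_empty]

lemma pow_ne_bot {I : Ideal (MvPolynomial (Fin n) K)} (hI : I ≠ ⊥) (m : ℕ) : I ^ m ≠ ⊥ := by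
  obtain ⟨x, hxI, hx0⟩ := Submodule.ne_bot_iff I |>.mp hI
  rw [Submodule.ne_bot_iff]
  exact ⟨x ^ m, Ideal.pow_mem_pow hxI m, pow_ne_zero m hx0⟩

lemma support_nsmul_eq {m : ℕ} (hm : m ≠ 0) (h : Fin n →₀ ℕ) :
    (m • h).support = h.support := by
  ext i
  simp only [Finsupp.mem_support_iff, Finsupp.smul_apply, smul_eq_mul]
  constructor
  · intro hmi h0; exact hmi (by rw [h0, mul_zero])
  · intro hi hc; rcases Nat.mul_eq_zero.mp hc with hc | hc
    · exact hm hc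
    · exact hi hc

lemma pow_mul_eq (h : Fin n →₀ ℕ) (I : Ideal (MvPolynomial (Fin n) K)) (m : ℕ) :
    (Ideal.span {(monomial h 1 : MvPolynomial (Fin n) K)} * I) ^ m
      = Ideal.span {(monomial (m • h) 1 : MvPolynomial (Fin n) K)} * I ^ m := by
  rw [mul_pow, Ideal.span_singleton_pow, monomial_pow, one_pow]

end NNTFAux

open NNTFAux in
/-- Let `h` be a monomial with `gcd(h,u) = 1` for every minimal generator `u` of
the monomial ideal `I`.  Then `I` is nearly normally torsion-free iff `hI` is. -/
theorem stmt3 {K : Type*} [Field K] {n : ℕ} (I : Ideal (MvPolynomial (Fin n) K))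
    (hmon : IsMonomialIdeal I) (h : Fin n →₀ ℕ)
    (hgcd : ∀ m : Fin n →₀ ℕ, IsMinGen I m → Disjoint h.support m.support) :
    IsNearlyNTF I ↔ IsNearlyNTF (Ideal.span {monomial h (1 : K)} * I) := by
  by_cases hh0 : h = 0
  · subst hh0
    rw [show (monomial (0 : Fin n →₀ ℕ) (1:K)) = 1 by rw [monomial_zero', C_1],
      Ideal.span_singleton_one, Ideal.top_mul]
  by_cases hIbot : I = ⊥
  · subst hIbot
    rw [Ideal.mul_bot]
  obtain ⟨S, hS, hIS⟩ := goodGen_of_monomialIdeal hmon h hgcd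
  have hSne : S.Nonempty := S_nonempty_of_ne_bot (K := K) (hIS ▸ hIbot)
  have hpow : ∀ m : ℕ, ∃ T : Set (Fin n →₀ ℕ),
      (∀ g ∈ T, Disjoint h.support g.support) ∧ I ^ m = Ideal.span (Mon K T) ∧ T.Nonempty := by
    intro m
    obtain ⟨T, hT, hIT⟩ := goodGen_pow ⟨S, hS, hIS⟩ m
    exact ⟨T, hT, hIT, S_nonempty_of_ne_bot (K := K) (hIT ▸ pow_ne_bot hIbot m)⟩
  set PS : Set (Ideal (MvPolynomial (Fin n) K)) :=
    (fun j => Ideal.span {(X j : MvPolynomial (Fin n) K)}) '' (h.support : Set (Fin n)) with hPS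
  have hEA : ∀ m : ℕ, 1 ≤ m →
      associatedPrimes (MvPolynomial (Fin n) K)
          ((MvPolynomial (Fin n) K) ⧸ (Ideal.span {monomial h (1 : K)} * I) ^ m)
        = associatedPrimes (MvPolynomial (Fin n) K) ((MvPolynomial (Fin n) K) ⧸ I ^ m) ∪ PS := by
    intro m hm
    obtain ⟨T, hT, hIT, hTne⟩ := hpow m
    rw [pow_mul_eq, hIT]
    exact key_ass hT hTne (support_nsmul_eq (by omega) h)
  have hNC : ∀ (m : ℕ), ∀ q ∈ PS,
      q ∉ associatedPrimes (MvPolynomial (Fin n) K) ((MvPolynomial (Fin n) K) ⧸ I ^ m) := by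
    rintro m _ ⟨j, hj, rfl⟩
    obtain ⟨T, hT, hIT, hTne⟩ := hpow m
    rw [hIT]
    exact spanX_not_assPrime hT (by simpa using hj)
  have hEM : (Ideal.span {monomial h (1 : K)} * I).minimalPrimes = I.minimalPrimes ∪ PS := by
    have := min_primes_eq (K := K) hS hSne
    rw [← hIS] at this
    exact this
  have hNM : ∀ q ∈ PS, q ∉ I.minimalPrimes := by
    rintro _ ⟨j, hj, rfl⟩
    rw [hIS]
    exact spanX_not_min hS hSne (by simpa using hj)
  constructor
  · rintro ⟨k, hk, p, hpmono, hEq, hSub⟩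
    refine ⟨k, hk, p, hpmono, ?_, ?_⟩
    · intro m hm1 hmk
      rw [hEA m hm1, hEq m hm1 hmk, hEM]
    · intro m hm
      have hm1 : 1 ≤ m := by omega
      rw [hEA m hm1, hEM]
      intro q hq
      rcases hq with hq | hq
      · rcases hSub m hm hq with hq2 | hq2
        · exact Or.inl (Or.inl hq2)
        · exact Or.inr hq2
      · exact Or.inl (Or.inr hq)
  · rintro ⟨k, hk, p, hpmono, hEq, hSub⟩
    refine ⟨k, hk, p, hpmono, ?_, ?_⟩
    · intro m hm1 hmk
      have h1 := hEq m hm1 hmk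
      rw [hEA m hm1, hEM] at h1
      ext q
      constructor
      · intro hq
        have h2 : q ∈ I.minimalPrimes ∪ PS := h1 ▸ (Set.mem_union_left _ hq)
        rcases h2 with h2 | h2
        · exact h2
        · exact absurd hq (hNC m q h2)
      · intro hq
        have h2 : q ∈ associatedPrimes (MvPolynomial (Fin n) K)
            ((MvPolynomial (Fin n) K) ⧸ I ^ m) ∪ PS := h1.symm ▸ (Set.mem_union_left _ hq)
        rcases h2 with h2 | h2
        · exact h2
        · exact absurd hq (hNM q h2)
    · intro m hm
      have hm1 : 1 ≤ m := by omega
      intro q hq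
      have hq2 : q ∈ associatedPrimes (MvPolynomial (Fin n) K)
          ((MvPolynomial (Fin n) K) ⧸ (Ideal.span {monomial h (1 : K)} * I) ^ m) := by
        rw [hEA m hm1]
        exact Or.inl hq
      have h3 := hSub m hm hq2
      rw [hEM] at h3
      rcases h3 with h3 | h3
      · rcases h3 with h4 | h4
        · exact Or.inl h4
        · exact absurd hq (hNC m q h4)
      · exact Or.inr h3
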